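/- arXiv:2310.04851 — 3 statements merged into one kernel-verified Lean document; each statement's English description precedes it below -/
import Mathlib

section
/- For every pair of integers m, n ≥ 3, the star chromatic number of the tensor product of cycles satisfies χ_s(C_m × C_n) ≥ 5. -/
/-- The tensor (categorical) product of two simple graphs: `(u,v)` and `(u',v')` are
adjacent iff `u` is adjacent to `u'` in `G` and `v` is adjacent to `v'` in `H`. -/
def SimpleGraph.tensorProd {α β : Type*} (G : SimpleGraph α) (H : SimpleGraph β) :
    SimpleGraph (α × β) where
  Adj x y := G.Adj x.1 y.1 ∧ H.Adj x.2 y.2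
  symm := ⟨fun _ _ h => ⟨h.1.symm, h.2.symm⟩⟩
  loopless := ⟨fun x h => G.loopless.irrefl x.1 h.1⟩

/-- A star coloring of `G` with colors in `Fin n`: a proper coloring such that every
path on four vertices (i.e. of length three) uses at least three distinct colors. -/
def SimpleGraph.IsStarColoring {α : Type*} (G : SimpleGraph α) {n : ℕ} (f : α → Fin n) : Prop :=
  (∀ ⦃u v : α⦄, G.Adj u v → f u ≠ f v) ∧
  ∀ (u v : α) (p : G.Walk u v), p.IsPath → p.length = 3 →
    3 ≤ (p.support.map f).toFinset.card

/-- The star chromatic number of `G`: the least number of colors in a star coloring. -/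
noncomputable def SimpleGraph.starChromaticNumber {α : Type*} (G : SimpleGraph α) : ℕ :=
  sInf {n : ℕ | ∃ f : α → Fin n, G.IsStarColoring f}

open SimpleGraph

/-!
The diagonal grid on `ℤ²`, where `(x, y)` is adjacent to `(x ± 1, y ± 1)`, covers `C_m × C_n`.
A star coloring of `C_m × C_n` pulls back to a proper coloring of the grid without bicolored
paths on four vertices, except possibly straight ones (whose ends coincide when `m = n = 3`).

With at most four colors, a bicolored path of length two in the grid forces the colors around
it, one vertex after another, until two adjacent vertices get the same color. Hence two vertices
at offset `(0, ±2)` or `(±2, 0)` have different colors, and so do two vertices at offset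
`(±2, ±2)` (in `C_3 × C_3` because they are adjacent there). But two of the four neighbors of a
vertex share a color, and any two of them lie at one of these offsets.
-/

namespace SimpleGraph

variable {α : Type*} {G : SimpleGraph α} {k : ℕ} {f : α → Fin k}

theorem isStarColoring_of_injective (hf : Function.Injective f) : G.IsStarColoring f := by
  refine ⟨fun u v huv h => G.ne_of_adj huv (hf h), fun u v p hp hlen => ?_⟩
  rw [List.toFinset_card_of_nodup (hp.support_nodup.map hf), List.length_map, p.length_support]
  omega

theorem le_starChromaticNumber [Fintype α] {n : ℕ}
    (h : ∀ k (f : α → Fin k), G.IsStarColoring f → n ≤ k) : n ≤ G.starChromaticNumber :=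
  le_csInf ⟨_, _, isStarColoring_of_injective (Fintype.equivFin α).injective⟩
    fun k ⟨f, hf⟩ => h k f hf

theorem IsStarColoring.apply_ne_of_apply_eq (hf : G.IsStarColoring f) {p q r s : α}
    (hpq : G.Adj p q) (hqr : G.Adj q r) (hrs : G.Adj r s) (hpr : p ≠ r) (hps : p ≠ s)
    (hqs : q ≠ s) (h : f q = f s) : f p ≠ f r := by
  intro h'
  have hpath : (Walk.cons hpq (.cons hqr (.cons hrs .nil))).IsPath := by
    simp [Walk.isPath_def, hpr, hps, hqs, hpq.ne, hqr.ne, hrs.ne]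
  have := hf.2 p s _ hpath rfl
  simp only [Walk.support_cons, Walk.support_nil, List.map_cons, h', h, List.map_nil,
    List.toFinset_cons, List.toFinset_nil, insert_empty_eq, Finset.mem_insert,
    Finset.mem_singleton, or_true, Finset.insert_eq_of_mem, true_or] at this
  exact absurd (this.trans Finset.card_le_two) (by decide)

end SimpleGraph

section Pigeonhole

variable {β : Type*} [Fintype β]

theorem eq_of_ne_of_ne_of_ne (hβ : Fintype.card β ≤ 4) {a b d x y : β}
    (habd : a ≠ b ∧ a ≠ d ∧ b ≠ d) (hx : x ≠ a ∧ x ≠ b ∧ x ≠ d) (hy : y ≠ a ∧ y ≠ b ∧ y ≠ d) :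
    x = y := by
  by_contra hxy
  have := List.Nodup.length_le_card (l := [x, y, a, b, d]) (by simp [*])
  simp only [List.length_cons, List.length_nil] at this
  omega

theorem eq_of_ne_of_ne (hβ : Fintype.card β ≤ 4) {a b x₁ x₂ x₃ : β} (hab : a ≠ b)
    (h₁ : x₁ ≠ a ∧ x₁ ≠ b) (h₂ : x₂ ≠ a ∧ x₂ ≠ b) (h₃ : x₃ ≠ a ∧ x₃ ≠ b)
    (h₁₂ : x₁ ≠ x₂) (h₂₃ : x₂ ≠ x₃) : x₁ = x₃ := by
  by_contra h₁₃
  have := List.Nodup.length_le_card (l := [x₁, x₂, x₃, a, b]) (by simp [*])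
  simp only [List.length_cons, List.length_nil] at this
  omega

theorem pigeonhole_of_ne (hβ : Fintype.card β ≤ 4) {a x₁ x₂ x₃ x₄ : β}
    (h₁ : x₁ ≠ a) (h₂ : x₂ ≠ a) (h₃ : x₃ ≠ a) (h₄ : x₄ ≠ a) :
    x₁ = x₂ ∨ x₁ = x₃ ∨ x₁ = x₄ ∨ x₂ = x₃ ∨ x₂ = x₄ ∨ x₃ = x₄ := by
  by_contra! h
  have := List.Nodup.length_le_card (l := [x₁, x₂, x₃, x₄, a]) (by simp [*])
  simp only [List.length_cons, List.length_nil] at this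
  omega

end Pigeonhole

namespace DiagGrid

def gap (p q : ℤ × ℤ) : ℕ × ℕ := ((p.1 - q.1).natAbs, (p.2 - q.2).natAbs)

theorem gap_eq_zero_zero_iff {p q : ℤ × ℤ} : gap p q = (0, 0) ↔ p = q := by
  simp only [gap, Prod.ext_iff, Int.natAbs_eq_zero, sub_eq_zero]

theorem gap_comm (p q : ℤ × ℤ) : gap p q = gap q p := by
  simp only [gap]
  congr 1 <;> omega

abbrev IsStep (p q : ℤ × ℤ) : Prop := gap p q = (1, 1)

abbrev IsPath (p q r s : ℤ × ℤ) : Prop :=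
  IsStep p q ∧ IsStep q r ∧ IsStep r s ∧ p ≠ r ∧ q ≠ s

variable {β : Type*}

/-- The conditions a star coloring of `C_m × C_n` induces on its cover. The star condition on
straight paths (ends at offset `(±3, ±3)`) is required only under `straight`: their ends coincide
in `C_3 × C_3`. -/
structure IsLocalStarColoring (straight : Prop) (c : ℤ × ℤ → β) : Prop where
  ne_of_isStep : ∀ ⦃p q⦄, IsStep p q → c p ≠ c q
  ne_of_isPath : ∀ ⦃p q r s⦄, IsPath p q r s → (gap p s = (3, 3) → straight) →
    c q = c s → c p ≠ c r

namespace IsLocalStarColoring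

variable {straight : Prop} {c : ℤ × ℤ → β}

theorem apply_ne (hc : IsLocalStarColoring straight c) {p q : ℤ × ℤ}
    (h : IsStep p q := by decide) : c p ≠ c q :=
  hc.ne_of_isStep h

theorem apply_ne_of_apply_eq (hc : IsLocalStarColoring straight c) {p q r s : ℤ × ℤ}
    (hqs : c q = c s) (h : IsPath p q r s := by decide) (hps : gap p s ≠ (3, 3) := by decide) :
    c p ≠ c r :=
  hc.ne_of_isPath h (fun h' => absurd h' hps) hqs

theorem apply_ne_of_apply_eq_of_straight (hc : IsLocalStarColoring straight c) (hs : straight)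
    {p q r s : ℤ × ℤ} (hqs : c q = c s) (h : IsPath p q r s := by decide) : c p ≠ c r :=
  hc.ne_of_isPath h (fun _ => hs) hqs

theorem comp (hc : IsLocalStarColoring straight c) {e : ℤ × ℤ → ℤ × ℤ}
    (he : ∀ p q, gap (e p) (e q) = gap p q ∨ gap (e p) (e q) = (gap p q).swap) :
    IsLocalStarColoring straight (c ∘ e) := by
  have gap_e : ∀ {p q : ℤ × ℤ} {d : ℕ × ℕ}, d.swap = d → (gap (e p) (e q) = d ↔ gap p q = d) := by
    intro p q d hd
    rcases he p q with h | h <;> rw [h]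
    rw [← Prod.swap_inj, Prod.swap_swap, hd]
  have ne_e : ∀ {p q : ℤ × ℤ}, p ≠ q → e p ≠ e q := fun h h' =>
    h (gap_eq_zero_zero_iff.1 ((gap_e rfl).1 (gap_eq_zero_zero_iff.2 h')))
  refine ⟨fun p q h => hc.ne_of_isStep ((gap_e rfl).2 h), ?_⟩
  rintro p q r s ⟨hpq, hqr, hrs, hpr, hqs⟩ hstraight
  exact hc.ne_of_isPath ⟨(gap_e rfl).2 hpq, (gap_e rfl).2 hqr, (gap_e rfl).2 hrs, ne_e hpr,
    ne_e hqs⟩ fun h => hstraight ((gap_e rfl).1 h)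

theorem comp_add_right (hc : IsLocalStarColoring straight c) (v : ℤ × ℤ) :
    IsLocalStarColoring straight fun x => c (x + v) :=
  hc.comp fun _ _ => Or.inl <| by
    simp only [gap, Prod.fst_add, Prod.snd_add, add_sub_add_right_eq_sub]

theorem comp_neg_snd (hc : IsLocalStarColoring straight c) :
    IsLocalStarColoring straight fun x => c (x.1, -x.2) :=
  hc.comp fun _ _ => Or.inl (by simp only [gap, Prod.mk.injEq, true_and]; omega)

theorem comp_swap (hc : IsLocalStarColoring straight c) :
    IsLocalStarColoring straight fun x => c x.swap :=
  hc.comp fun _ _ => Or.inr rfl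

variable [Fintype β]

theorem apply_one_one_ne_apply_one_neg_one (hc : IsLocalStarColoring straight c)
    (hβ : Fintype.card β ≤ 4) : c (1, 1) ≠ c (1, -1) := by
  intro h
  -- `(1, 1)` and `(1, -1)` are the ends of bicolored paths centered at `(0, 0)` and at `(2, 0)`;
  -- each step pins down one more color, until `(3, 1)` gets the color of its neighbor `(2, 0)`.
  have hW : c (2, 0) ≠ c (0, 0) := hc.apply_ne_of_apply_eq h
  have hP : c (0, 2) = c (2, 2) :=
    eq_of_ne_of_ne_of_ne hβ (a := c (1, 1)) (b := c (0, 0)) (d := c (2, 0))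
      ⟨hc.apply_ne, hc.apply_ne, hW.symm⟩
      ⟨hc.apply_ne, hc.apply_ne_of_apply_eq h, hc.apply_ne_of_apply_eq h⟩
      ⟨hc.apply_ne, hc.apply_ne_of_apply_eq h, hc.apply_ne_of_apply_eq h⟩
  have hN : c (-1, 1) = c (2, 0) :=
    eq_of_ne_of_ne_of_ne hβ (a := c (1, 1)) (b := c (0, 0)) (d := c (0, 2))
      ⟨hc.apply_ne, hc.apply_ne, Ne.symm (hc.apply_ne_of_apply_eq h)⟩
      ⟨hc.apply_ne_of_apply_eq hP, hc.apply_ne, hc.apply_ne⟩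
      ⟨hc.apply_ne, hW, Ne.symm (hc.apply_ne_of_apply_eq h)⟩
  have hR : c (1, 3) = c (0, 0) :=
    eq_of_ne_of_ne_of_ne hβ (a := c (1, 1)) (b := c (0, 2)) (d := c (2, 0))
      ⟨hc.apply_ne, hc.apply_ne, hc.apply_ne_of_apply_eq h⟩
      ⟨hc.apply_ne_of_apply_eq hP, hc.apply_ne, hN ▸ Ne.symm (hc.apply_ne_of_apply_eq hP)⟩
      ⟨hc.apply_ne, Ne.symm (hc.apply_ne_of_apply_eq h), hW.symm⟩
  have hT : c (3, 1) = c (2, 0) :=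
    eq_of_ne_of_ne_of_ne hβ (a := c (1, 1)) (b := c (0, 0)) (d := c (0, 2))
      ⟨hc.apply_ne, hc.apply_ne, Ne.symm (hc.apply_ne_of_apply_eq h)⟩
      ⟨hc.apply_ne_of_apply_eq hP.symm, hR ▸ hc.apply_ne_of_apply_eq hP.symm, hP ▸ hc.apply_ne⟩
      ⟨hc.apply_ne, hW, Ne.symm (hc.apply_ne_of_apply_eq h)⟩
  exact absurd hT hc.apply_ne

theorem apply_ne_of_gap_eq_zero_two (hc : IsLocalStarColoring straight c)
    (hβ : Fintype.card β ≤ 4) {p q : ℤ × ℤ} (h : gap p q = (0, 2)) : c p ≠ c q := by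
  wlog hlt : q.2 < p.2 generalizing p q
  · refine Ne.symm (this (gap_comm q p ▸ h) ?_)
    simp only [gap, Prod.ext_iff] at h
    omega
  have := (hc.comp_add_right (p.1 - 1, q.2 + 1)).apply_one_one_ne_apply_one_neg_one hβ
  simp only [gap, Prod.ext_iff] at h
  convert this using 2 <;> ext <;> simp only [Prod.mk_add_mk] <;> omega

theorem apply_ne_of_gap_eq_two_zero (hc : IsLocalStarColoring straight c)
    (hβ : Fintype.card β ≤ 4) {p q : ℤ × ℤ} (h : gap p q = (2, 0)) : c p ≠ c q :=
  hc.comp_swap.apply_ne_of_gap_eq_zero_two hβ (p := p.swap) (q := q.swap) (congrArg Prod.swap h)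

theorem apply_ne_of_gap (hc : IsLocalStarColoring straight c) (hβ : Fintype.card β ≤ 4)
    {p q : ℤ × ℤ} (h : gap p q = (0, 2) ∨ gap p q = (2, 0) := by decide) : c p ≠ c q :=
  h.elim (hc.apply_ne_of_gap_eq_zero_two hβ) (hc.apply_ne_of_gap_eq_two_zero hβ)

theorem apply_one_one_ne_apply_neg_one_neg_one (hc : IsLocalStarColoring straight c)
    (hs : straight) (hβ : Fintype.card β ≤ 4) : c (1, 1) ≠ c (-1, -1) := by
  intro h
  -- Pigeonhole yields bicolored paths of length two centered at `(1, 1)`, `(0, 2)` and `(2, 0)`,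
  -- which force `c (2, 2) = c (2, 0)`.
  have hB : c (0, 2) = c (2, 0) :=
    eq_of_ne_of_ne hβ (a := c (1, 1)) (b := c (0, 0)) (x₂ := c (2, 2)) hc.apply_ne
      ⟨hc.apply_ne, hc.apply_ne_of_apply_eq h⟩
      ⟨hc.apply_ne, hc.apply_ne_of_apply_eq_of_straight hs h⟩
      ⟨hc.apply_ne, hc.apply_ne_of_apply_eq h⟩
      (hc.apply_ne_of_gap hβ) (hc.apply_ne_of_gap hβ)
  have hL : c (-1, 1) = c (1, 3) :=
    eq_of_ne_of_ne hβ (a := c (0, 2)) (b := c (1, 1)) (x₂ := c (-1, 3)) hc.apply_ne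
      ⟨hc.apply_ne, hc.apply_ne_of_apply_eq hB⟩
      ⟨hc.apply_ne, hc.apply_ne_of_apply_eq_of_straight hs hB⟩
      ⟨hc.apply_ne, hc.apply_ne_of_apply_eq hB⟩
      (hc.apply_ne_of_gap hβ) (hc.apply_ne_of_gap hβ)
  have hR : c (1, -1) = c (3, 1) :=
    eq_of_ne_of_ne hβ (a := c (2, 0)) (b := c (1, 1)) (x₂ := c (3, -1)) hc.apply_ne
      ⟨hc.apply_ne, hc.apply_ne_of_apply_eq hB.symm⟩
      ⟨hc.apply_ne, hc.apply_ne_of_apply_eq_of_straight hs hB.symm⟩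
      ⟨hc.apply_ne, hc.apply_ne_of_apply_eq hB.symm⟩
      (hc.apply_ne_of_gap hβ) (hc.apply_ne_of_gap hβ)
  have hV : c (0, 0) ≠ c (0, 2) := Ne.symm (hc.apply_ne_of_apply_eq h)
  have hLR : c (1, 3) = c (3, 1) :=
    eq_of_ne_of_ne_of_ne hβ (a := c (0, 0)) (b := c (1, 1)) (d := c (0, 2))
      ⟨hc.apply_ne, hV, hc.apply_ne⟩
      ⟨hL ▸ hc.apply_ne, hc.apply_ne_of_apply_eq hB, hc.apply_ne⟩
      ⟨hR ▸ hc.apply_ne, hc.apply_ne_of_apply_eq hB.symm, hB ▸ hR ▸ hc.apply_ne⟩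
  have hQ : c (2, 2) = c (2, 0) :=
    eq_of_ne_of_ne_of_ne hβ (a := c (0, 0)) (b := c (1, 1)) (d := c (1, 3))
      ⟨hc.apply_ne, hL ▸ Ne.symm hc.apply_ne, Ne.symm (hc.apply_ne_of_apply_eq hB)⟩
      ⟨hc.apply_ne_of_apply_eq_of_straight hs h, hc.apply_ne, hc.apply_ne⟩
      ⟨hc.apply_ne_of_apply_eq h, hc.apply_ne, hB ▸ hc.apply_ne⟩
  exact absurd hQ (hc.apply_ne_of_gap hβ)

theorem apply_ne_of_gap_eq_two_two (hc : IsLocalStarColoring straight c) (hs : straight)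
    (hβ : Fintype.card β ≤ 4) {p q : ℤ × ℤ} (h : gap p q = (2, 2)) : c p ≠ c q := by
  wlog hlt : q.1 < p.1 generalizing p q
  · refine Ne.symm (this (gap_comm q p ▸ h) ?_)
    simp only [gap, Prod.ext_iff] at h
    omega
  simp only [gap, Prod.ext_iff] at h
  rcases (by omega : p.2 = q.2 + 2 ∨ p.2 = q.2 - 2) with hp | hp
  · have := (hc.comp_add_right (q.1 + 1, q.2 + 1)).apply_one_one_ne_apply_neg_one_neg_one hs hβ
    convert this using 2 <;> ext <;> simp only [Prod.mk_add_mk] <;> omega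
  · have := apply_one_one_ne_apply_neg_one_neg_one
      (hc.comp_neg_snd.comp_add_right (q.1 + 1, 1 - q.2)) hs hβ
    convert this using 2 <;> ext <;> simp only [Prod.mk_add_mk] <;> omega

theorem false_of_card_le_four (hc : IsLocalStarColoring straight c) (hβ : Fintype.card β ≤ 4)
    (hdiag : ∀ ⦃p q⦄, gap p q = (2, 2) → c p ≠ c q) : False := by
  rcases pigeonhole_of_ne hβ (a := c (0, 0)) (x₁ := c (1, 1)) (x₂ := c (1, -1))
    (x₃ := c (-1, 1)) (x₄ := c (-1, -1)) hc.apply_ne hc.apply_ne hc.apply_ne hc.apply_ne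
    with h | h | h | h | h | h
  · exact absurd h (hc.apply_ne_of_gap hβ)
  · exact absurd h (hc.apply_ne_of_gap hβ)
  · exact hdiag (by decide) h
  · exact hdiag (by decide) h
  · exact absurd h (hc.apply_ne_of_gap hβ)
  · exact absurd h (hc.apply_ne_of_gap hβ)

end IsLocalStarColoring

def IsNear (p q : ℤ × ℤ) : Prop :=
  (0 < (gap p q).1 ∧ (gap p q).1 < 3) ∨ (0 < (gap p q).2 ∧ (gap p q).2 < 3)

theorem IsPath.isNear {p q r s : ℤ × ℤ} (h : IsPath p q r s) :
    IsNear p r ∧ IsNear q s ∧ (gap p s ≠ (3, 3) → IsNear p s) := by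
  obtain ⟨hpq, hqr, hrs, hpr, hqs⟩ := h
  simp only [IsNear, gap, Prod.ext_iff, ne_eq] at *
  omega

end DiagGrid

open DiagGrid

namespace SimpleGraph

variable {α : Type*} {G : SimpleGraph α} {k : ℕ} {f : α → Fin k}

theorem IsStarColoring.isLocalStarColoring_comp (hf : G.IsStarColoring f) {straight : Prop}
    {φ : ℤ × ℤ → α}
    (hadj : ∀ ⦃p q⦄, IsStep p q → G.Adj (φ p) (φ q))
    (hne : ∀ ⦃p q⦄, IsNear p q → φ p ≠ φ q)
    (hne_straight : straight → ∀ ⦃p q⦄, gap p q = (3, 3) → φ p ≠ φ q) :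
    IsLocalStarColoring straight (f ∘ φ) where
  ne_of_isStep _ _ h := hf.1 (hadj h)
  ne_of_isPath p q r s h hs hqs := by
    obtain ⟨hpr, hqs', hps⟩ := h.isNear
    have hps' : φ p ≠ φ s := by
      by_cases h33 : gap p s = (3, 3)
      · exact hne_straight (hs h33) h33
      · exact hne (hps h33)
    exact hf.apply_ne_of_apply_eq (hadj h.1) (hadj h.2.1) (hadj h.2.2.1) (hne hpr) hps'
      (hne hqs') hqs

end SimpleGraph

section Torus

open Fin.CommRing

variable {m n : ℕ} [NeZero m] [NeZero n]

theorem cycleGraph_adj_intCast (hm : 2 ≤ m) {x y : ℤ} (h : (x - y).natAbs = 1) :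
    (cycleGraph m).Adj x y := by
  have val_one : (1 : Fin m).val = 1 := Nat.mod_eq_of_lt hm
  rw [cycleGraph_adj']
  rcases (by omega : x - y = 1 ∨ y - x = 1) with h | h
  · left; rw [← Int.cast_sub, h, Int.cast_one, val_one]
  · right; rw [← Int.cast_sub, h, Int.cast_one, val_one]

theorem natAbs_sub_eq_zero_or_le_of_intCast_eq {x y : ℤ} (h : (x : Fin m) = y) :
    (x - y).natAbs = 0 ∨ m ≤ (x - y).natAbs := by
  have hdvd : m ∣ (x - y).natAbs := by
    simpa using Int.natAbs_dvd_natAbs.2 ((CharP.intCast_eq_intCast (Fin m) m).1 h).symm.dvd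
  exact (Nat.eq_zero_or_pos _).imp_right (Nat.le_of_dvd · hdvd)

variable (m n) in
def torusCover (p : ℤ × ℤ) : Fin m × Fin n := (p.1, p.2)

theorem torusCover_adj (hm : 2 ≤ m) (hn : 2 ≤ n) {p q : ℤ × ℤ} (h : IsStep p q) :
    ((cycleGraph m).tensorProd (cycleGraph n)).Adj (torusCover m n p) (torusCover m n q) := by
  simp only [IsStep, gap, Prod.ext_iff] at h
  exact ⟨cycleGraph_adj_intCast hm h.1, cycleGraph_adj_intCast hn h.2⟩

theorem torusCover_ne_of_isNear (hm : 3 ≤ m) (hn : 3 ≤ n) {p q : ℤ × ℤ} (h : IsNear p q) :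
    torusCover m n p ≠ torusCover m n q := by
  intro e
  have h₁ := natAbs_sub_eq_zero_or_le_of_intCast_eq (congrArg Prod.fst e)
  have h₂ := natAbs_sub_eq_zero_or_le_of_intCast_eq (congrArg Prod.snd e)
  simp only [IsNear, gap] at h
  omega

theorem torusCover_ne_of_gap_eq_three_three (hmn : 4 ≤ m ∨ 4 ≤ n) {p q : ℤ × ℤ}
    (h : gap p q = (3, 3)) : torusCover m n p ≠ torusCover m n q := by
  intro e
  have h₁ := natAbs_sub_eq_zero_or_le_of_intCast_eq (congrArg Prod.fst e)
  have h₂ := natAbs_sub_eq_zero_or_le_of_intCast_eq (congrArg Prod.snd e)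
  simp only [gap, Prod.ext_iff] at h
  omega

theorem torusCover_three_adj {p q : ℤ × ℤ} (h : gap p q = (2, 2)) :
    ((cycleGraph 3).tensorProd (cycleGraph 3)).Adj (torusCover 3 3 p) (torusCover 3 3 q) := by
  simp only [gap, Prod.ext_iff] at h
  rw [cycleGraph_three_eq_top]
  exact ⟨fun e => by have := natAbs_sub_eq_zero_or_le_of_intCast_eq e; omega,
    fun e => by have := natAbs_sub_eq_zero_or_le_of_intCast_eq e; omega⟩

end Torus

theorem starChromaticNumber_cycleGraph_tensorProd_cycleGraph_ge (m n : ℕ)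
    (hm : 3 ≤ m) (hn : 3 ≤ n) :
    5 ≤ ((cycleGraph m).tensorProd (cycleGraph n)).starChromaticNumber := by
  have : NeZero m := ⟨by omega⟩
  have : NeZero n := ⟨by omega⟩
  refine le_starChromaticNumber fun k f hf => ?_
  by_contra! hk
  have hcard : Fintype.card (Fin k) ≤ 4 := by rw [Fintype.card_fin]; omega
  have hc : IsLocalStarColoring (4 ≤ m ∨ 4 ≤ n) (f ∘ torusCover m n) :=
    hf.isLocalStarColoring_comp (fun _ _ => torusCover_adj (by omega) (by omega))
      (fun _ _ => torusCover_ne_of_isNear hm hn)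
      fun hs _ _ => torusCover_ne_of_gap_eq_three_three hs
  refine hc.false_of_card_le_four hcard fun p q hpq => ?_
  by_cases hs : 4 ≤ m ∨ 4 ≤ n
  · exact hc.apply_ne_of_gap_eq_two_two hs hcard hpq
  · obtain ⟨rfl, rfl⟩ : m = 3 ∧ n = 3 := by omega
    exact hf.1 (torusCover_three_adj hpq)
end

section
/- The star chromatic number of the tensor product of two triangles is 6, i.e. χ_s(C_3 × C_3) = 6. -/
open SimpleGraph

/-!
In `C₃ × C₃` two vertices are adjacent iff they differ in both coordinates, so the independent
sets are the subsets of rows and of columns. The colouring with classes `{(0,0), (0,1)}`,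
`{(1,0), (1,1)}`, `{(0,2), (1,2)}` and three singletons is a star colouring.

Conversely, take a star colouring with at most five colours. If a class has three vertices it
is a whole line, and every vertex off the line is adjacent to two of its points; two vertices of
another common colour would then share a neighbour `b` on the line, one of them having a second
neighbour `b'` there, and close a bicoloured path. So all other classes are singletons and at
most `3 + 4 < 9` vertices are coloured. Otherwise every class has at most two vertices and, `9`
being odd, one class is a singleton `{w}`. A vertex `u` on a line through `w` cannot also be a
singleton (that would leave at most `1 + 1 + 2 · 3 < 9` vertices), so it has a partner `u'`.
The `8` edges leaving `{u, u'}` avoid their own colour, at most one goes to `w` (as `u ≁ w`), and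
at most two go to any other class of size at most two, since otherwise one of `u, u'` has both
vertices of that class as neighbours and the other one a neighbour among them. Hence
`8 ≤ 1 + 2 · 3`, a contradiction.
-/

open Finset

namespace Finset

theorem three_le_card_of_not_alternating {γ : Type*} [DecidableEq γ] {w x y z : γ} (hwx : w ≠ x)
    (hxy : x ≠ y) (hyz : y ≠ z) (h : ¬(w = y ∧ x = z)) : 3 ≤ #{w, x, y, z} := by
  rcases not_and_or.1 h with hwy | hxz
  · calc 3 = #{w, x, y} := (card_eq_three.2 ⟨w, x, y, hwx, hwy, hxy, rfl⟩).symm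
      _ ≤ #{w, x, y, z} := card_le_card <| insert_subset_insert w <| insert_subset_insert x <|
          singleton_subset_iff.2 (mem_insert_self y _)
  · calc 3 = #{x, y, z} := (card_eq_three.2 ⟨x, y, z, hxy, hxz, hyz, rfl⟩).symm
      _ ≤ #{w, x, y, z} := card_le_card (subset_insert w _)

theorem sum_le_add_card_sub_one_mul {ι : Type*} {s : Finset ι} {i : ι} (hi : i ∈ s) {t : ι → ℕ}
    {m : ℕ} (h : ∀ k ∈ s, k ≠ i → t k ≤ m) : ∑ k ∈ s, t k ≤ t i + (#s - 1) * m := by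
  classical
  rw [← add_sum_erase s t hi, ← card_erase_of_mem hi, ← smul_eq_mul]
  exact Nat.add_le_add_left (sum_le_card_nsmul _ _ _ fun k hk => h k (mem_of_mem_erase hk)
    (ne_of_mem_erase hk)) _

theorem sum_le_add_add_card_sub_two_mul {ι : Type*} [Fintype ι] [DecidableEq ι] {i j : ι}
    (hij : i ≠ j) {t : ι → ℕ} {m : ℕ} (h : ∀ k, k ≠ i → k ≠ j → t k ≤ m) :
    ∑ k, t k ≤ t i + t j + (Fintype.card ι - 2) * m := by
  calc ∑ k, t k = t i + ∑ k ∈ univ.erase i, t k := (add_sum_erase _ _ (mem_univ i)).symm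
    _ ≤ t i + (t j + (#(univ.erase i) - 1) * m) := by
      gcongr
      exact sum_le_add_card_sub_one_mul (mem_erase.2 ⟨hij.symm, mem_univ j⟩)
        fun k hk hkj => h k (ne_of_mem_erase hk) hkj
    _ = t i + t j + (Fintype.card ι - 2) * m := by
      rw [card_erase_of_mem (mem_univ _), card_univ, Nat.sub_sub, add_assoc]

end Finset

namespace SimpleGraph

variable {α : Type*}

instance {β : Type*} (G : SimpleGraph α) (H : SimpleGraph β) [DecidableRel G.Adj]
    [DecidableRel H.Adj] : DecidableRel (G.tensorProd H).Adj :=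
  fun _ _ => inferInstanceAs (Decidable (_ ∧ _))

variable {G : SimpleGraph α} {n : ℕ} {f : α → Fin n}

theorem isStarColoring_iff : G.IsStarColoring f ↔ (∀ ⦃u v⦄, G.Adj u v → f u ≠ f v) ∧
    ∀ ⦃a b c d⦄, G.Adj a b → G.Adj b c → G.Adj c d → a ≠ c → b ≠ d → f a = f c → f b ≠ f d := by
  refine ⟨fun hf => ⟨hf.1, fun a b c d hab hbc hcd hac hbd hfac hfbd => ?_⟩,
    fun ⟨hproper, hstar⟩ => ⟨hproper, fun u v p hp hlen => ?_⟩⟩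
  · have had : a ≠ d := by rintro rfl; exact hf.1 hab hfbd.symm
    have hpath : (Walk.cons hab (.cons hbc (.cons hcd .nil))).IsPath := by
      simp [Walk.isPath_def, hab.ne, hbc.ne, hcd.ne, hac, hbd, had]
    have h3 := hf.2 _ _ _ hpath rfl
    simp only [Walk.support_cons, Walk.support_nil, List.map_cons, hfac, hfbd, List.map_nil,
      List.toFinset_cons, List.toFinset_nil, insert_empty_eq, mem_insert, mem_singleton, or_true,
      insert_eq_of_mem, true_or] at h3
    have := card_le_two (a := f c) (b := f d)
    omega
  · rcases p with _ | ⟨hab, _ | ⟨hbc, _ | ⟨hcd, _ | ⟨_, _⟩⟩⟩⟩ <;> simp only [Walk.length_cons,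
      Walk.length_nil] at hlen <;> try omega
    simp only [Walk.isPath_def, Walk.support_cons, Walk.support_nil, List.nodup_cons,
      List.mem_cons, List.not_mem_nil, or_false, not_or, List.nodup_nil, and_true] at hp
    simp only [Walk.support_cons, Walk.support_nil, List.map_cons, List.map_nil,
      List.toFinset_cons, List.toFinset_nil, LawfulSingleton.insert_empty_eq]
    exact three_le_card_of_not_alternating (hproper hab) (hproper hbc) (hproper hcd)
      fun h => hstar hab hbc hcd hp.1.2.1 hp.2.1.2 h.1 h.2

namespace IsStarColoring

theorem starChromaticNumber_le (hf : G.IsStarColoring f) : G.starChromaticNumber ≤ n :=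
  Nat.sInf_le ⟨f, hf⟩

theorem exists_isStarColoring_starChromaticNumber (hf : G.IsStarColoring f) :
    ∃ g : α → Fin G.starChromaticNumber, G.IsStarColoring g :=
  Nat.sInf_mem (s := {n | ∃ f : α → Fin n, G.IsStarColoring f}) ⟨n, f, hf⟩

theorem not_alternating (hf : G.IsStarColoring f) {a b c d : α} (hab : G.Adj a b)
    (hbc : G.Adj b c) (hcd : G.Adj c d) (hac : a ≠ c) (hbd : b ≠ d) (hfac : f a = f c) :
    f b ≠ f d :=
  (isStarColoring_iff.1 hf).2 hab hbc hcd hac hbd hfac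

variable [Fintype α] [DecidableRel G.Adj]

theorem filter_neighborFinset_eq_empty (hf : G.IsStarColoring f) {u u' : α} (hne : u ≠ u')
    (hfu : f u = f u') {d : Fin n} (hd : #{v | f v = d} ≤ 2)
    (hu : 2 ≤ #{v ∈ G.neighborFinset u | f v = d}) : {v ∈ G.neighborFinset u' | f v = d} = ∅ := by
  refine eq_empty_of_forall_notMem fun y hy => ?_
  have heq := eq_of_subset_of_card_le (filter_subset_filter _ (subset_univ _)) (hd.trans hu)
  simp only [mem_filter, mem_neighborFinset] at hy
  have hyu : y ∈ {v ∈ G.neighborFinset u | f v = d} := heq ▸ by simp [hy.2]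
  obtain ⟨b, hb, hby⟩ := (one_lt_card_iff_nontrivial.1 hu).exists_ne y
  simp only [mem_filter, mem_neighborFinset] at hyu hb
  exact hf.not_alternating hy.1 hyu.1.symm hb.1 hne.symm hby.symm hfu.symm (hy.2.trans hb.2.symm)

theorem card_filter_neighborFinset_add_le_two (hf : G.IsStarColoring f) {u u' : α} (hne : u ≠ u')
    (hfu : f u = f u') {d : Fin n} (hd : #{v | f v = d} ≤ 2) :
    #{v ∈ G.neighborFinset u | f v = d} + #{v ∈ G.neighborFinset u' | f v = d} ≤ 2 := by
  have hle : ∀ w, #{v ∈ G.neighborFinset w | f v = d} ≤ 2 := fun w =>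
    (card_le_card (filter_subset_filter _ (subset_univ _))).trans hd
  by_cases hu : 2 ≤ #{v ∈ G.neighborFinset u | f v = d}
  · rw [hf.filter_neighborFinset_eq_empty hne hfu hd hu, card_empty]
    exact hle u
  by_cases hu' : 2 ≤ #{v ∈ G.neighborFinset u' | f v = d}
  · rw [hf.filter_neighborFinset_eq_empty hne.symm hfu.symm hd hu', card_empty]
    simpa using hle u'
  omega

end IsStarColoring

abbrev triangleTensorSq : SimpleGraph (Fin 3 × Fin 3) := (cycleGraph 3).tensorProd (cycleGraph 3)

namespace triangleTensorSq

theorem degree_eq_four (v : Fin 3 × Fin 3) : triangleTensorSq.degree v = 4 := by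
  revert v; decide

-- The independent 3-sets are the rows and the columns, and a vertex off a line is adjacent to
-- the two points of the line outside its own row and column.
set_option maxRecDepth 4000 in
theorem two_le_card_filter_adj_of_notMem {T : Finset (Fin 3 × Fin 3)}
    (hT : triangleTensorSq.IsNIndepSet 3 T) {p : Fin 3 × Fin 3} (hp : p ∉ T) :
    2 ≤ #{b ∈ T | triangleTensorSq.Adj p b} := by
  revert T p; decide

theorem exists_adj_adj_adj_of_notMem {T : Finset (Fin 3 × Fin 3)}
    (hT : triangleTensorSq.IsNIndepSet 3 T) {p q : Fin 3 × Fin 3} (hp : p ∉ T) (hq : q ∉ T) :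
    ∃ b ∈ T, ∃ b' ∈ T, b ≠ b' ∧ triangleTensorSq.Adj p b ∧ triangleTensorSq.Adj p b' ∧
      triangleTensorSq.Adj q b := by
  have hp2 := two_le_card_filter_adj_of_notMem hT hp
  have hpq : #T < #{b ∈ T | triangleTensorSq.Adj p b} + #{b ∈ T | triangleTensorSq.Adj q b} := by
    have := two_le_card_filter_adj_of_notMem hT hq
    have := hT.card_eq
    omega
  obtain ⟨b, hb⟩ :=
    inter_nonempty_of_card_lt_card_add_card (filter_subset _ _) (filter_subset _ _) hpq
  obtain ⟨b', hb', hb'b⟩ := (one_lt_card_iff_nontrivial.1 hp2).exists_ne b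
  simp only [mem_inter, mem_filter] at hb hb'
  exact ⟨b, hb.1.1, b', hb'.1, hb'b.symm, hb.1.2, hb'.2, hb.2.2⟩

variable {n : ℕ} {f : Fin 3 × Fin 3 → Fin n}

theorem card_le_of_three_le_card (hf : triangleTensorSq.IsStarColoring f) {c : Fin n}
    (hc : 3 ≤ #{v | f v = c}) : #{v | f v = c} ≤ 3 ∧ ∀ d ≠ c, #{v | f v = d} ≤ 1 := by
  obtain ⟨T, hTc, hT⟩ := exists_subset_card_eq hc
  have hTind : triangleTensorSq.IsNIndepSet 3 T := by
    refine ⟨fun x hx y hy hxy hadj => hf.1 hadj ?_, hT⟩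
    simp only [mem_coe] at hx hy
    have hx := (mem_filter.1 (hTc hx)).2
    have hy := (mem_filter.1 (hTc hy)).2
    rw [hx, hy]
  have hcolor : ∀ p ∉ T, f p ≠ c := fun p hp hpc => by
    obtain ⟨b, hb, -, -, -, hpb, -, -⟩ := exists_adj_adj_adj_of_notMem hTind hp hp
    exact hf.1 hpb (hpc.trans (mem_filter.1 (hTc hb)).2.symm)
  refine ⟨(card_le_card (t := T) fun p hp => ?_).trans hT.le,
    fun d hdc => card_le_one.2 fun p hp q hq => ?_⟩
  · by_contra hpT
    exact hcolor p hpT (mem_filter.1 hp).2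
  · by_contra hpq
    simp only [mem_filter, mem_univ, true_and] at hp hq
    have hpT : p ∉ T := fun h => hdc (hp ▸ (mem_filter.1 (hTc h)).2)
    have hqT : q ∉ T := fun h => hdc (hq ▸ (mem_filter.1 (hTc h)).2)
    obtain ⟨b, hb, b', hb', hbb', hpb, hpb', hqb⟩ := exists_adj_adj_adj_of_notMem hTind hpT hqT
    exact hf.not_alternating hqb hpb.symm hpb' (Ne.symm hpq) hbb' (hq.trans hp.symm)
      ((mem_filter.1 (hTc hb)).2.trans (mem_filter.1 (hTc hb')).2.symm)

theorem card_le_one_of_not_adj (hf : triangleTensorSq.IsStarColoring f) (hn : n ≤ 5)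
    (hsmall : ∀ d, #{v | f v = d} ≤ 2) {u w : Fin 3 × Fin 3} (huw : ¬triangleTensorSq.Adj u w)
    (hw : #{v | f v = f w} ≤ 1) : #{v | f v = f u} ≤ 1 := by
  by_contra! hu
  obtain ⟨u', hu', hu'u⟩ := (one_lt_card_iff_nontrivial.1 hu).exists_ne u
  have hfu' : f u = f u' := ((mem_filter.1 hu').2).symm
  have hfuw : f u ≠ f w := fun h => by rw [h] at hu; omega
  set N : Fin 3 × Fin 3 → Fin n → ℕ :=
    fun x d => #{v ∈ triangleTensorSq.neighborFinset x | f v = d}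
  have hdeg : ∀ x, ∑ d, N x d = 4 := fun x => by
    rw [← degree_eq_four x, ← card_neighborFinset_eq_degree]
    exact (card_eq_sum_card_fiberwise fun v _ => mem_univ (f v)).symm
  have hown : ∀ x, f x = f u → N x (f u) = 0 := fun x hx =>
    card_eq_zero.2 (filter_eq_empty_iff.2 fun v hv hvu =>
      hf.1 ((mem_neighborFinset _ _ _).1 hv) (hx.trans hvu.symm))
  have hwu : N u (f w) = 0 := card_eq_zero.2 (filter_eq_empty_iff.2 fun v hv hvw => huw <|
    card_le_one.1 hw v (by simp [hvw]) w (by simp) ▸ (mem_neighborFinset _ _ _).1 hv)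
  have hwu' : N u' (f w) ≤ 1 := (card_le_card (filter_subset_filter _ (subset_univ _))).trans hw
  have := sum_le_add_add_card_sub_two_mul hfuw (t := fun d => N u d + N u' d) (m := 2)
    fun d _ _ => hf.card_filter_neighborFinset_add_le_two (Ne.symm hu'u) hfu' (hsmall d)
  rw [sum_add_distrib, hdeg, hdeg, hown u rfl, hown u' hfu'.symm, hwu, Fintype.card_fin] at this
  omega

theorem six_le_of_isStarColoring (hf : triangleTensorSq.IsStarColoring f) : 6 ≤ n := by
  by_contra! hn
  have hsum : ∑ d, #{v | f v = d} = 9 :=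
    (card_eq_sum_card_fiberwise fun v _ => mem_univ (f v)).symm
  by_cases hbig : ∃ c, 3 ≤ #{v | f v = c}
  · obtain ⟨c, hc⟩ := hbig
    obtain ⟨hc3, hd1⟩ := card_le_of_three_le_card hf hc
    have := sum_le_add_card_sub_one_mul (mem_univ c) (t := fun d => #{v | f v = d}) (m := 1)
      fun d _ hdc => hd1 d hdc
    rw [card_univ, Fintype.card_fin] at this
    omega
  push Not at hbig
  obtain ⟨d, hd⟩ : ∃ d, #{v | f v = d} = 1 := by
    by_contra! hne
    have : Even (∑ d, #{v | f v = d}) := even_sum _ fun d _ => by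
      have := hbig d; have := hne d; exact Nat.even_iff.2 (by omega)
    rw [hsum] at this
    exact absurd this (by decide)
  obtain ⟨w, hw⟩ := card_eq_one.1 hd
  have hwd : w ∈ ({v | f v = d} : Finset _) := hw ▸ mem_singleton_self w
  obtain rfl : f w = d := (mem_filter.1 hwd).2
  set u : Fin 3 × Fin 3 := (w.1, w.2 + 1)
  have hu : #{v | f v = f u} ≤ 1 :=
    card_le_one_of_not_adj (u := u) (w := w) hf (by omega) (fun d => by have := hbig d; omega)
      (fun h => h.1.ne rfl) hd.le
  have hne : f u ≠ f w := fun h => by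
    have := congrArg Prod.snd (card_le_one.1 hd.le u (by simp [h]) w (by simp))
    simp [u] at this
  have := sum_le_add_add_card_sub_two_mul hne (t := fun d => #{v | f v = d}) (m := 2)
    fun d _ _ => by have := hbig d; omega
  rw [Fintype.card_fin] at this
  omega

def sixColoring (v : Fin 3 × Fin 3) : Fin 6 := ![![0, 0, 1], ![2, 2, 1], ![3, 4, 5]] v.1 v.2

set_option synthInstance.maxSize 1000 in
theorem isStarColoring_sixColoring : triangleTensorSq.IsStarColoring sixColoring :=
  isStarColoring_iff.2 ⟨by decide, by decide⟩

end triangleTensorSq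

end SimpleGraph

theorem starChromaticNumber_C3_tensorProd_C3 :
    ((cycleGraph 3).tensorProd (cycleGraph 3)).starChromaticNumber = 6 := by
  have hsix := triangleTensorSq.isStarColoring_sixColoring
  obtain ⟨f, hf⟩ := hsix.exists_isStarColoring_starChromaticNumber
  exact le_antisymm hsix.starChromaticNumber_le (triangleTensorSq.six_le_of_isStarColoring hf)
end

section
/- For every integer m ≥ 3, the star chromatic number of the tensor product of the cycle C_m with the path P_3 satisfies χ_s(C_m × P_3) = 3. -/
open SimpleGraph

theorem exists_ne_add_two_of_map {m k : ℕ} [NeZero m] (φ : Fin m → Fin (k + 2))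
    (hφ : ∀ c, φ (c + 2) = φ c + 1) : ∃ g : Fin m → Fin 3, ∀ c, g c ≠ g (c + 2) :=
  ⟨fun c => cycleGraph.tricoloring (k + 2) (by omega) (φ c), fun c =>
    (cycleGraph.tricoloring _ _).valid (by rw [hφ, cycleGraph_adj]; simp)⟩

open Fin.CommRing in
/-- Pull back a 3-colouring of a cycle along `c ↦ ⌊c / 2⌋` onto the cycle of half the length
when `m + 3` is even, and along multiplication by `k + 1 = 2⁻¹` onto `C_{m+3}` itself when
`m + 3 = 2k + 1`. -/
theorem exists_ne_add_two (m : ℕ) : ∃ g : Fin (m + 3) → Fin 3, ∀ c, g c ≠ g (c + 2) := by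
  rcases Nat.even_or_odd' (m + 3) with ⟨k, hk | hk⟩
  · obtain ⟨k, rfl⟩ : ∃ k', k = k' + 2 := ⟨k - 2, by omega⟩
    refine exists_ne_add_two_of_map (k := k) (fun c => ⟨c.val / 2, by omega⟩) fun c => ?_
    have hc := c.isLt
    simp only [Fin.ext_iff, Fin.val_add, Fin.val_one, Fin.val_two]
    rcases lt_or_ge (c.val + 2) (m + 3) with hwrap | hwrap
    · rw [Nat.mod_eq_of_lt hwrap, Nat.mod_eq_of_lt (by omega)]
      omega
    · rw [Nat.mod_eq_sub_mod hwrap, Nat.mod_eq_of_lt (by omega),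
        show c.val / 2 + 1 = k + 2 by omega, Nat.mod_self]
      omega
  · refine exists_ne_add_two_of_map (k := m + 1) (· * ((k + 1 : ℕ) : Fin (m + 3))) fun c => ?_
    have two_mul_inv : ((2 * (k + 1) : ℕ) : Fin (m + 3)) = 1 := by
      rw [show 2 * (k + 1) = m + 3 + 1 by omega, Nat.cast_add, Fin.natCast_self, zero_add,
        Nat.cast_one]
    rw [← two_mul_inv]
    push_cast
    ring

namespace SimpleGraph

variable {V : Type*} {G : SimpleGraph V} {n : ℕ}

theorem IsStarColoring.three_le {f : V → Fin n} (hf : G.IsStarColoring f) {u v : V}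
    (p : G.Walk u v) (hp : p.IsPath) (hlen : p.length = 3) : 3 ≤ n :=
  (hf.2 u v p hp hlen).trans ((Finset.card_le_univ _).trans_eq (Fintype.card_fin n))

theorem Walk.exists_support_eq_of_length_eq_three {u v : V} (p : G.Walk u v)
    (hlen : p.length = 3) :
    ∃ w₁ w₂, G.Adj u w₁ ∧ G.Adj w₁ w₂ ∧ G.Adj w₂ v ∧ p.support = [u, w₁, w₂, v] := by
  match p, hlen with
  | .cons h₁ (.cons h₂ (.cons h₃ .nil)), _ => exact ⟨_, _, h₁, h₂, h₃, rfl⟩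

/-- Every path on four vertices contains a path `x - y - z` with `x ∈ s`. -/
theorem IsBipartiteWith.isStarColoring {s t : Set V} {f : V → Fin n}
    (hG : G.IsBipartiteWith s t) (hproper : ∀ ⦃u v⦄, G.Adj u v → f u ≠ f v)
    (hs : ∀ ⦃x y z⦄, x ∈ s → G.Adj x y → G.Adj y z → x ≠ z → f x ≠ f z) :
    G.IsStarColoring f := by
  refine ⟨hproper, fun u v p hp hlen => ?_⟩
  have three_colors : ∀ ⦃x y z⦄, x ∈ s → G.Adj x y → G.Adj y z → x ≠ z →
      x ∈ p.support → y ∈ p.support → z ∈ p.support →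
      3 ≤ (p.support.map f).toFinset.card := by
    intro x y z hx hxy hyz hxz hx' hy' hz'
    calc 3 = ({f x, f y, f z} : Finset (Fin n)).card :=
          (Finset.card_eq_three.mpr
            ⟨_, _, _, hproper hxy, hs hx hxy hyz hxz, hproper hyz, rfl⟩).symm
      _ ≤ _ := Finset.card_le_card fun c hc => by
          simp only [Finset.mem_insert, Finset.mem_singleton] at hc
          rcases hc with rfl | rfl | rfl <;> simp only [List.mem_toFinset, List.mem_map] <;>
            exact ⟨_, ‹_›, rfl⟩
  obtain ⟨w₁, w₂, h₁, h₂, h₃, hsupp⟩ := p.exists_support_eq_of_length_eq_three hlen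
  have hnodup := hp.support_nodup
  rw [hsupp] at hnodup
  simp only [List.nodup_cons, List.mem_cons, List.not_mem_nil, or_false, not_or] at hnodup
  by_cases hw₁ : w₁ ∈ s
  · exact three_colors hw₁ h₂ h₃ hnodup.2.1.2 (by simp [hsupp]) (by simp [hsupp])
      (by simp [hsupp])
  · have hu : u ∈ s := by
      rcases hG.mem_of_adj h₁ with h | h
      · exact h.1
      · exact absurd h.2 hw₁
    exact three_colors hu h₁ h₂ hnodup.1.2.1 (by simp [hsupp]) (by simp [hsupp])
      (by simp [hsupp])

theorem isBipartiteWith_tensorProd_pathGraph_three (G : SimpleGraph V) :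
    (G.tensorProd (pathGraph 3)).IsBipartiteWith {x | x.2 = 1} {x | x.2 ≠ 1} where
  disjoint := Set.disjoint_left.mpr fun _ h h' => h' h
  mem_of_adj := by
    rintro ⟨a, j⟩ ⟨c, k⟩ ⟨-, hjk⟩
    change (j = 1 ∧ k ≠ 1) ∨ (j ≠ 1 ∧ k = 1)
    rw [pathGraph_adj] at hjk
    simp only [Fin.ext_iff, Fin.val_one] at hjk ⊢
    omega

theorem isStarColoring_tensorProd_pathGraph_three {g h : V → Fin n}
    (hg : ∀ ⦃a b c⦄, G.Adj a c → G.Adj b c → a ≠ b → g a ≠ g b)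
    (hgh : ∀ ⦃a c⦄, G.Adj a c → g a ≠ h c) :
    (G.tensorProd (pathGraph 3)).IsStarColoring fun x => if x.2 = 1 then g x.1 else h x.1 := by
  have hG := isBipartiteWith_tensorProd_pathGraph_three G
  refine hG.isStarColoring ?_ ?_
  · rintro ⟨a, j⟩ ⟨c, k⟩ hadj
    rcases hG.mem_of_adj hadj with ⟨hj : j = 1, hk : k ≠ 1⟩ | ⟨hj : j ≠ 1, hk : k = 1⟩
    · simpa [hj, hk] using hgh hadj.1
    · simpa [hj, hk] using (hgh hadj.1.symm).symm
  · rintro ⟨a, j⟩ y ⟨b, l⟩ (hj : j = 1) hxy hyz hxz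
    obtain hl : l = 1 := hG.mem_of_mem_adj' (hG.mem_of_mem_adj hj hxy) hyz.symm
    subst hj hl
    have hab : a ≠ b := fun hab => hxz (by rw [hab])
    simpa using hg hxy.1 hyz.1.symm hab

theorem IsStarColoring.three_le_of_tensorProd_pathGraph_three {a b c : V} (hab : G.Adj a b)
    (hbc : G.Adj b c) (hac : a ≠ c) {f : V × Fin 3 → Fin n}
    (hf : (G.tensorProd (pathGraph 3)).IsStarColoring f) : 3 ≤ n := by
  let p : (G.tensorProd (pathGraph 3)).Walk (a, 1) (b, 2) :=
    .cons (v := (b, 0)) ⟨hab, by simp [pathGraph_adj]⟩ <|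
      .cons (v := (c, 1)) ⟨hbc, by simp [pathGraph_adj]⟩ <|
        .cons ⟨hbc.symm, by simp [pathGraph_adj]⟩ .nil
  refine hf.three_le p ?_ rfl
  rw [Walk.isPath_def]
  change [(a, 1), (b, 0), (c, 1), (b, 2)].Nodup
  simp [hac]

theorem exists_forall_adj_ne [G.LocallyFinite] (g : V → Fin n) (hdeg : ∀ v, G.degree v < n) :
    ∃ h : V → Fin n, ∀ ⦃a c⦄, G.Adj a c → g a ≠ h c := by
  have hfree : ∀ c, ∃ x, x ∉ (G.neighborFinset c).image g := fun c => by
    obtain ⟨x, -, hx⟩ := Finset.exists_mem_notMem_of_card_lt_card (t := Finset.univ)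
      (Finset.card_image_le.trans_lt
        (by rw [G.card_neighborFinset_eq_degree c, Finset.card_fin]; exact hdeg c))
    exact ⟨x, hx⟩
  choose h hh using hfree
  exact ⟨h, fun a c hac hgh => hh c (Finset.mem_image.mpr ⟨a, by simpa using hac.symm, hgh⟩)⟩

open Fin.CommRing in
theorem cycleGraph.ne_of_adj_of_adj {α : Type*} {m : ℕ} {g : Fin (m + 2) → α}
    (hg : ∀ c, g c ≠ g (c + 2)) ⦃a b c : Fin (m + 2)⦄ (hac : (cycleGraph (m + 2)).Adj a c)
    (hbc : (cycleGraph (m + 2)).Adj b c) (hab : a ≠ b) : g a ≠ g b := by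
  have hnbr : ∀ {x}, (cycleGraph (m + 2)).Adj x c → x = c - 1 ∨ x = c + 1 := fun hx => by
    have hx' := hx.symm
    rw [← mem_neighborSet, cycleGraph_neighborSet] at hx'
    simpa using hx'
  have hshift : c - 1 + 2 = c + 1 := by ring
  rcases hnbr hac with rfl | rfl <;> rcases hnbr hbc with rfl | rfl
  · exact absurd rfl hab
  · exact hshift ▸ hg (c - 1)
  · exact (hshift ▸ hg (c - 1)).symm
  · exact absurd rfl hab

theorem exists_isStarColoring_cycleGraph_tensorProd_pathGraph_three (m : ℕ) :
    ∃ f : Fin (m + 3) × Fin 3 → Fin 3,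
      ((cycleGraph (m + 3)).tensorProd (pathGraph 3)).IsStarColoring f := by
  obtain ⟨g, hg⟩ := exists_ne_add_two m
  obtain ⟨h, hgh⟩ := (cycleGraph (m + 3)).exists_forall_adj_ne g fun _ => by
    rw [cycleGraph_degree_three_le]; norm_num
  exact ⟨_, isStarColoring_tensorProd_pathGraph_three (cycleGraph.ne_of_adj_of_adj hg) hgh⟩

end SimpleGraph

theorem starChromaticNumber_Cm_tensorProd_P3 (m : ℕ) (hm : 3 ≤ m) :
    ((cycleGraph m).tensorProd (pathGraph 3)).starChromaticNumber = 3 := by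
  obtain ⟨n, rfl⟩ : ∃ n, m = n + 3 := ⟨m - 3, by omega⟩
  refine IsLeast.csInf_eq ⟨exists_isStarColoring_cycleGraph_tensorProd_pathGraph_three n, ?_⟩
  rintro k ⟨f, hf⟩
  obtain ⟨a, c, hac, hnbr⟩ := Finset.card_eq_two.mp
    (((cycleGraph (n + 3)).card_neighborFinset_eq_degree 0).trans cycleGraph_degree_three_le)
  have hadj : ∀ x ∈ (cycleGraph (n + 3)).neighborFinset 0, (cycleGraph (n + 3)).Adj 0 x :=
    fun x hx => (mem_neighborFinset _ _ _).mp hx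
  exact hf.three_le_of_tensorProd_pathGraph_three (hadj a (by simp [hnbr])).symm
    (hadj c (by simp [hnbr])) hac
end
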